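/- arXiv:2307.15204 — 5 statements merged into one kernel-verified Lean document; each statement's English description precedes it below -/
import Mathlib

section
/- The covariance of the Horvitz–Thompson estimators for two distinct exposures satisfies Cov(Ŷ, Ẑ) = (1/N²)∑_{i=1}^N ∑_{j≠i} (r_{ij} − p_i q_j)(y_i/p_i)(z_j/q_j) − (1/N²)∑_{i=1}^N y_i z_i. -/
/-!
Both estimators are linear combinations of indicators, `Ŷ = N⁻¹ ∑ᵢ 1_{Bᵢ} aᵢ` and
`Ẑ = N⁻¹ ∑ⱼ 1_{Cⱼ} bⱼ` with `aᵢ = yᵢ / pᵢ`, `bⱼ = zⱼ / qⱼ`. Since `1_{Bᵢ} 1_{Cⱼ} = 1_{Bᵢ ∩ Cⱼ}`,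
bilinearity gives `Cov(Ŷ, Ẑ) = N⁻² ∑ᵢ ∑ⱼ (rᵢⱼ - pᵢ qⱼ) aᵢ bⱼ`. Disjointness of `Bᵢ` and `Cᵢ`
makes `rᵢᵢ = 0`, so the diagonal term is `-pᵢ qᵢ aᵢ bᵢ = -yᵢ zᵢ`.
-/

open MeasureTheory Finset

theorem sum_indicator_mul_sum_indicator {Ω ι κ : Type*} [Fintype ι] [Fintype κ]
    (A : ι → Set Ω) (B : κ → Set Ω) (a : ι → ℝ) (b : κ → ℝ) (ω : Ω) :
    (∑ i, (A i).indicator (fun _ => a i) ω) * ∑ j, (B j).indicator (fun _ => b j) ω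
      = ∑ i, ∑ j, (A i ∩ B j).indicator (fun _ => a i * b j) ω := by
  simp only [sum_mul_sum, Set.inter_indicator_mul]

theorem indicator_one_mul_div {α K : Type*} [DivisionRing K] (s : Set α) (c d : K) (x : α) :
    s.indicator (fun _ => (1 : K)) x * c / d = s.indicator (fun _ => c / d) x := by
  rw [mul_div_assoc, ← Set.indicator_mul_const, one_mul]

section SumIndicator

variable {Ω ι κ : Type*} [MeasurableSpace Ω] {μ : Measure Ω} [IsFiniteMeasure μ]

theorem integral_sum_indicator_const {s : Finset ι} {A : ι → Set Ω}
    (hA : ∀ i ∈ s, MeasurableSet (A i)) (a : ι → ℝ) :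
    ∫ ω, ∑ i ∈ s, (A i).indicator (fun _ => a i) ω ∂μ = ∑ i ∈ s, μ.real (A i) * a i := by
  rw [integral_finsetSum _ fun i hi => (integrable_const (a i)).indicator (hA i hi)]
  exact sum_congr rfl fun i hi => integral_indicator_const (a i) (hA i hi)

theorem integral_mul_sub_integral_mul_integral_sum_indicator [Fintype ι] [Fintype κ]
    {A : ι → Set Ω} {B : κ → Set Ω} (hA : ∀ i, MeasurableSet (A i))
    (hB : ∀ j, MeasurableSet (B j)) (a : ι → ℝ) (b : κ → ℝ) :
    (∫ ω, (∑ i, (A i).indicator (fun _ => a i) ω) * ∑ j, (B j).indicator (fun _ => b j) ω ∂μ)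
        - (∫ ω, ∑ i, (A i).indicator (fun _ => a i) ω ∂μ)
          * ∫ ω, ∑ j, (B j).indicator (fun _ => b j) ω ∂μ
      = ∑ i, ∑ j, (μ.real (A i ∩ B j) - μ.real (A i) * μ.real (B j)) * a i * b j := by
  have hXY : ∫ ω, (∑ i, (A i).indicator (fun _ => a i) ω)
        * ∑ j, (B j).indicator (fun _ => b j) ω ∂μ
      = ∑ i, ∑ j, μ.real (A i ∩ B j) * (a i * b j) := by
    simp only [sum_indicator_mul_sum_indicator]
    rw [integral_finsetSum _ fun i _ => integrable_finsetSum _ fun j _ =>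
      (integrable_const (a i * b j)).indicator ((hA i).inter (hB j))]
    exact sum_congr rfl fun i _ =>
      integral_sum_indicator_const (fun j _ => (hA i).inter (hB j)) _
  rw [hXY, integral_sum_indicator_const (fun i _ => hA i),
    integral_sum_indicator_const (fun j _ => hB j), sum_mul_sum, ← sum_sub_distrib]
  exact sum_congr rfl fun i _ => by rw [← sum_sub_distrib]; exact sum_congr rfl fun j _ => by ring

end SumIndicator

theorem horvitz_thompson_covariance_general
    {Ω : Type*} [MeasurableSpace Ω] (P : Measure Ω) [IsProbabilityMeasure P]
    (N : ℕ)
    (B C : Fin N → Set Ω) (hB : ∀ i, MeasurableSet (B i)) (hC : ∀ i, MeasurableSet (C i))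
    (hBC : ∀ i, B i ∩ C i = ∅)
    (y z p q : Fin N → ℝ) (r : Fin N → Fin N → ℝ)
    (hp : ∀ i, p i = (P (B i)).toReal) (hppos : ∀ i, 0 < p i)
    (hq : ∀ i, q i = (P (C i)).toReal) (hqpos : ∀ i, 0 < q i)
    (hr : ∀ i j, r i j = (P (B i ∩ C j)).toReal)
    (Yhat Zhat : Ω → ℝ)
    (hY : Yhat = fun ω =>
      (1 / (N : ℝ)) * ∑ i, (B i).indicator (fun _ => (1 : ℝ)) ω * y i / p i)
    (hZ : Zhat = fun ω =>
      (1 / (N : ℝ)) * ∑ i, (C i).indicator (fun _ => (1 : ℝ)) ω * z i / q i) :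
    (∫ ω, Yhat ω * Zhat ω ∂P) - (∫ ω, Yhat ω ∂P) * (∫ ω, Zhat ω ∂P)
      = (1 / (N : ℝ) ^ 2) * ∑ i, ∑ j ∈ Finset.univ.filter (fun j => j ≠ i),
          (r i j - p i * q j) * (y i / p i) * (z j / q j)
        - (1 / (N : ℝ) ^ 2) * ∑ i, y i * z i := by
  set X := fun ω => ∑ i, (B i).indicator (fun _ => y i / p i) ω
  set Z := fun ω => ∑ j, (C j).indicator (fun _ => z j / q j) ω
  have hYX : Yhat = fun ω => 1 / (N : ℝ) * X ω := by simp only [hY, indicator_one_mul_div, X]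
  have hZZ : Zhat = fun ω => 1 / (N : ℝ) * Z ω := by simp only [hZ, indicator_one_mul_div, Z]
  have hcov : (∫ ω, X ω * Z ω ∂P) - (∫ ω, X ω ∂P) * ∫ ω, Z ω ∂P
      = ∑ i, ∑ j, (r i j - p i * q j) * (y i / p i) * (z j / q j) := by
    simpa only [measureReal_def, ← hp, ← hq, ← hr]
      using integral_mul_sub_integral_mul_integral_sum_indicator (μ := P) hB hC _ _
  have hdiag (i : Fin N) : (r i i - p i * q i) * (y i / p i) * (z i / q i) = -(y i * z i) := by
    rw [hr, hBC, measure_empty, ENNReal.toReal_zero]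
    field_simp [(hppos i).ne', (hqpos i).ne']
    ring
  have hoff (i : Fin N) : ∑ j ∈ univ.filter (fun j => j ≠ i),
      (r i j - p i * q j) * (y i / p i) * (z j / q j)
        = ∑ j, (r i j - p i * q j) * (y i / p i) * (z j / q j) + y i * z i := by
    rw [filter_ne', sum_erase_eq_sub (mem_univ i), hdiag, sub_neg_eq_add]
  calc (∫ ω, Yhat ω * Zhat ω ∂P) - (∫ ω, Yhat ω ∂P) * (∫ ω, Zhat ω ∂P)
      = 1 / (N : ℝ) ^ 2 * ((∫ ω, X ω * Z ω ∂P) - (∫ ω, X ω ∂P) * ∫ ω, Z ω ∂P) := by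
        simp only [hYX, hZZ, mul_mul_mul_comm (1 / (N : ℝ)), integral_const_mul]
        ring
    _ = _ := by rw [hcov]; simp only [hoff, sum_add_distrib]; ring

/-- **Covariance of the Horvitz–Thompson estimators for two distinct exposures.**
`Cov(Ŷ, Ẑ) = (1/N²) ∑ᵢ ∑_{j≠i} (r_{ij} − pᵢ qⱼ)(yᵢ/pᵢ)(zⱼ/qⱼ) − (1/N²) ∑ᵢ yᵢ zᵢ`,
where `Ŷ = (1/N) ∑ᵢ 1_{Bᵢ} yᵢ/pᵢ`, `Ẑ = (1/N) ∑ᵢ 1_{Cᵢ} zᵢ/qᵢ`,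
`pᵢ = P(Bᵢ) > 0`, `qᵢ = P(Cᵢ) > 0`, `r_{ij} = P(Bᵢ ∩ Cⱼ)`, `Bᵢ ∩ Cᵢ = ∅`,
and `Cov(X,Y) = E[XY] − E[X]E[Y]`. -/
theorem horvitz_thompson_covariance
    {Ω : Type*} [MeasurableSpace Ω] (P : Measure Ω) [IsProbabilityMeasure P]
    (N : ℕ) (hN : 0 < N)
    (B C : Fin N → Set Ω) (hB : ∀ i, MeasurableSet (B i)) (hC : ∀ i, MeasurableSet (C i))
    (hBC : ∀ i, B i ∩ C i = ∅)
    (y z p q : Fin N → ℝ) (r : Fin N → Fin N → ℝ)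
    (hp : ∀ i, p i = (P (B i)).toReal) (hppos : ∀ i, 0 < p i)
    (hq : ∀ i, q i = (P (C i)).toReal) (hqpos : ∀ i, 0 < q i)
    (hr : ∀ i j, r i j = (P (B i ∩ C j)).toReal)
    (Yhat Zhat : Ω → ℝ)
    (hY : Yhat = fun ω =>
      (1 / (N : ℝ)) * ∑ i, (B i).indicator (fun _ => (1 : ℝ)) ω * y i / p i)
    (hZ : Zhat = fun ω =>
      (1 / (N : ℝ)) * ∑ i, (C i).indicator (fun _ => (1 : ℝ)) ω * z i / q i) :
    (∫ ω, Yhat ω * Zhat ω ∂P) - (∫ ω, Yhat ω ∂P) * (∫ ω, Zhat ω ∂P)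
      = (1 / (N : ℝ) ^ 2) * ∑ i, ∑ j ∈ Finset.univ.filter (fun j => j ≠ i),
          (r i j - p i * q j) * (y i / p i) * (z j / q j)
        - (1 / (N : ℝ) ^ 2) * ∑ i, y i * z i :=
  horvitz_thompson_covariance_general P N B C hB hC hBC y z p q r hp hppos hq hqpos hr Yhat Zhat hY
    hZ
end

section
/- Under a completely randomized design, the joint exposure probability of two units satisfies: if T is drawn uniformly at random from the subsets of {1,…,N} of size N_t (with N_t ≤ N), and S₁, S₂, A₁, A₂ are fixed subsets with A₁ ⊆ S₁, A₂ ⊆ S₂, then (i) if the two exposures are compatible, i.e. A₁ ∩ S₂ = A₂ ∩ S₁, and |A₁ ∪ A₂| ≤ N_t, then P(T ∩ S₁ = A₁ and T ∩ S₂ = A₂) = C(N − |S₁ ∪ S₂|, N_t − |A₁ ∪ A₂|) / C(N, N_t); and (ii) if A₁ ∩ S₂ ≠ A₂ ∩ S₁ (incompatible exposures), then P(T ∩ S₁ = A₁ and T ∩ S₂ = A₂) = 0. -/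
/-!
Both events only constrain `T` on `S₁ ∪ S₂`. Compatibility of the exposures makes the joint event
equivalent to `T ∩ (S₁ ∪ S₂) = A₁ ∪ A₂`, and the treatment sets of size `Nt` satisfying this are
`(A₁ ∪ A₂) ∪ B` with `B` any `(Nt - |A₁ ∪ A₂|)`-subset of the complement of `S₁ ∪ S₂`. Without
compatibility the joint event is empty, since `T ∩ S₁ ∩ S₂` would have to equal both `A₁ ∩ S₂` and
`A₂ ∩ S₁`.
-/

open scoped ENNReal

open Finset

namespace Finset

variable {α : Type*} [DecidableEq α]

theorem inter_eq_and_inter_eq_iff_inter_union_eq {T S₁ S₂ A₁ A₂ : Finset α}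
    (hA₁ : A₁ ⊆ S₁) (hA₂ : A₂ ⊆ S₂) (hcompat : A₁ ∩ S₂ = A₂ ∩ S₁) :
    T ∩ S₁ = A₁ ∧ T ∩ S₂ = A₂ ↔ T ∩ (S₁ ∪ S₂) = A₁ ∪ A₂ := by
  constructor
  · rintro ⟨h₁, h₂⟩
    rw [inter_union_distrib_left, h₁, h₂]
  · intro h
    constructor
    · calc T ∩ S₁ = (A₁ ∪ A₂) ∩ S₁ := by rw [← h, inter_assoc, union_inter_cancel_left]
        _ = A₁ ∪ A₁ ∩ S₂ := by rw [union_inter_distrib_right, inter_eq_left.2 hA₁, hcompat]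
        _ = A₁ := union_eq_left.2 inter_subset_left
    · calc T ∩ S₂ = (A₁ ∪ A₂) ∩ S₂ := by rw [← h, inter_assoc, union_inter_cancel_right]
        _ = A₂ ∩ S₁ ∪ A₂ := by rw [union_inter_distrib_right, inter_eq_left.2 hA₂, hcompat]
        _ = A₂ := union_eq_right.2 inter_subset_left

theorem inter_eq_inter_of_inter_eq_of_inter_eq {T S₁ S₂ A₁ A₂ : Finset α}
    (h₁ : T ∩ S₁ = A₁) (h₂ : T ∩ S₂ = A₂) : A₁ ∩ S₂ = A₂ ∩ S₁ := by
  rw [← h₁, ← h₂, inter_assoc, inter_assoc, inter_comm S₁]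

theorem card_filter_powersetCard_inter_eq [Fintype α] {k : ℕ} {S A : Finset α}
    (hAS : A ⊆ S) (hA : #A ≤ k) :
    #{T ∈ powersetCard k univ | T ∩ S = A} = (Fintype.card α - #S).choose (k - #A) := by
  rw [← card_compl, ← card_powersetCard]
  apply card_nbij' (· \ S) (A ∪ ·)
  · intro T hT
    simp only [coe_filter, mem_powersetCard, Set.mem_ofPred_eq, mem_coe] at hT ⊢
    obtain ⟨⟨-, hk⟩, hTS⟩ := hT
    refine ⟨fun x => by simp, ?_⟩
    rw [← sdiff_inter_self_left, card_sdiff_of_subset inter_subset_left, hTS, hk]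
  · intro B hB
    simp only [coe_filter, mem_powersetCard, Set.mem_ofPred_eq, mem_coe,
      subset_compl_iff_disjoint_right] at hB ⊢
    have hAB : Disjoint A B := hB.1.symm.mono_left hAS
    refine ⟨⟨subset_univ _, by rw [card_union_of_disjoint hAB]; omega⟩, ?_⟩
    rw [union_inter_distrib_right, inter_eq_left.2 hAS, disjoint_iff_inter_eq_empty.1 hB.1,
      union_empty]
  · intro T hT
    simp only [coe_filter, Set.mem_ofPred_eq] at hT
    rw [← hT.2]
    exact sup_inf_sdiff T S
  · intro B hB
    simp only [mem_coe, mem_powersetCard, subset_compl_iff_disjoint_right] at hB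
    simp [union_sdiff_distrib, sdiff_eq_empty_iff_subset.2 hAS, hB.1]

end Finset

theorem joint_exposure_probability_completely_randomized_general
    (N Nt : ℕ)
    (S₁ S₂ A₁ A₂ : Finset (Fin N)) (hA₁ : A₁ ⊆ S₁) (hA₂ : A₂ ⊆ S₂)
    (hne : (Finset.powersetCard Nt (Finset.univ : Finset (Fin N))).Nonempty) :
    (A₁ ∩ S₂ = A₂ ∩ S₁ → (A₁ ∪ A₂).card ≤ Nt →
      (@PMF.toMeasure (Finset (Fin N)) ⊤ (PMF.uniformOfFinset _ hne))
          {T : Finset (Fin N) | T ∩ S₁ = A₁ ∧ T ∩ S₂ = A₂}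
        = (Nat.choose (N - (S₁ ∪ S₂).card) (Nt - (A₁ ∪ A₂).card) : ℝ≥0∞)
            / (Nat.choose N Nt : ℝ≥0∞))
    ∧ (A₁ ∩ S₂ ≠ A₂ ∩ S₁ →
      (@PMF.toMeasure (Finset (Fin N)) ⊤ (PMF.uniformOfFinset _ hne))
          {T : Finset (Fin N) | T ∩ S₁ = A₁ ∧ T ∩ S₂ = A₂} = 0) := by
  have hprob (t : Set (Finset (Fin N))) :=
    @PMF.toMeasure_uniformOfFinset_apply _ _ hne t ⊤ trivial
  simp only [hprob, Set.mem_ofPred_eq, card_powersetCard, card_univ, Fintype.card_fin]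
  refine ⟨fun hcompat hle => ?_, fun hincompat => ?_⟩
  · rw [filter_congr fun T _ => inter_eq_and_inter_eq_iff_inter_union_eq hA₁ hA₂ hcompat,
      card_filter_powersetCard_inter_eq (union_subset_union hA₁ hA₂) hle, Fintype.card_fin]
  · rw [filter_false_of_mem fun T _ h =>
        hincompat (inter_eq_inter_of_inter_eq_of_inter_eq h.1 h.2),
      card_empty, Nat.cast_zero, ENNReal.zero_div]

/-- **Joint exposure probability under complete randomization.**
If `T` is drawn uniformly at random from the subsets of `{1,…,N}` of size `Nt`
(with `Nt ≤ N`), and `S₁, S₂, A₁, A₂` are fixed with `A₁ ⊆ S₁`, `A₂ ⊆ S₂`, then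
(i) if the exposures are compatible (`A₁ ∩ S₂ = A₂ ∩ S₁`) and `|A₁ ∪ A₂| ≤ Nt`,
`P(T ∩ S₁ = A₁ ∧ T ∩ S₂ = A₂) = C(N − |S₁ ∪ S₂|, Nt − |A₁ ∪ A₂|) / C(N, Nt)`;
(ii) if `A₁ ∩ S₂ ≠ A₂ ∩ S₁` (incompatible exposures), this probability is `0`. -/
theorem joint_exposure_probability_completely_randomized
    (N Nt : ℕ) (hNt : Nt ≤ N)
    (S₁ S₂ A₁ A₂ : Finset (Fin N)) (hA₁ : A₁ ⊆ S₁) (hA₂ : A₂ ⊆ S₂)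
    (hne : (Finset.powersetCard Nt (Finset.univ : Finset (Fin N))).Nonempty) :
    (A₁ ∩ S₂ = A₂ ∩ S₁ → (A₁ ∪ A₂).card ≤ Nt →
      (@PMF.toMeasure (Finset (Fin N)) ⊤ (PMF.uniformOfFinset _ hne))
          {T : Finset (Fin N) | T ∩ S₁ = A₁ ∧ T ∩ S₂ = A₂}
        = (Nat.choose (N - (S₁ ∪ S₂).card) (Nt - (A₁ ∪ A₂).card) : ℝ≥0∞)
            / (Nat.choose N Nt : ℝ≥0∞))
    ∧ (A₁ ∩ S₂ ≠ A₂ ∩ S₁ →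
      (@PMF.toMeasure (Finset (Fin N)) ⊤ (PMF.uniformOfFinset _ hne))
          {T : Finset (Fin N) | T ∩ S₁ = A₁ ∧ T ∩ S₂ = A₂} = 0) :=
  joint_exposure_probability_completely_randomized_general N Nt S₁ S₂ A₁ A₂ hA₁ hA₂ hne
end

section
/- (Bias of the Horvitz–Thompson variance estimator) Define the variance estimator V̂ = (1/N²)∑_{i=1}^N 1_{A_i}(1−π_i)(y_i/π_i)² + (1/N²)∑_{i=1}^N ∑_{j≠i, π_{ij}>0} 1_{A_i ∩ A_j} ((π_{ij} − π_i π_j)/π_{ij}) (y_i/π_i)(y_j/π_j). Then E[V̂] = Var(Ŷ) + A, where A = (1/N²)∑_{i=1}^N ∑_{j≠i, π_{ij}=0} y_i y_j. -/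
/-!
With `c_i = y_i / π_i` and `π_ii = π_i`, the variance of `Ŷ` is the quadratic form
`N⁻² ∑_{i,j} c_i c_j (π_ij - π_i π_j)` in the covariances of the indicators. Since
`E[1_{A_i ∩ A_j}] = π_ij`, each term of `V̂`, the diagonal ones included, is an unbiased
estimator of the matching term of this sum. The only terms without a counterpart in `V̂` are
those with `i ≠ j` and `π_ij = 0`, and each equals `c_i c_j (0 - π_i π_j) = -y_i y_j`.
-/

open MeasureTheory ProbabilityTheory

section Indicators

variable {Ω : Type*} [MeasurableSpace Ω] {μ : Measure Ω} {s t : Set Ω}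

lemma memLp_indicator_one [IsFiniteMeasure μ] (p : ENNReal) (hs : MeasurableSet s) :
    MemLp (s.indicator (1 : Ω → ℝ)) p μ :=
  memLp_indicator_const p hs 1 (Or.inr (measure_ne_top μ s))

@[fun_prop]
lemma integrable_indicator_one [IsFiniteMeasure μ] (hs : MeasurableSet s) :
    Integrable (s.indicator (1 : Ω → ℝ)) μ :=
  (integrable_const 1).indicator hs

lemma covariance_indicator_one [IsProbabilityMeasure μ] (hs : MeasurableSet s)
    (ht : MeasurableSet t) :
    cov[s.indicator 1, t.indicator 1; μ] = μ.real (s ∩ t) - μ.real s * μ.real t := by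
  rw [covariance_eq_sub (memLp_indicator_one 2 hs) (memLp_indicator_one 2 ht),
    ← Set.inter_indicator_one, integral_indicator_one hs, integral_indicator_one ht,
    integral_indicator_one (hs.inter ht)]

lemma integral_finsetSum_indicator_one_mul [IsFiniteMeasure μ] {ι : Type*} (u : Finset ι)
    {A : ι → Set Ω} (hA : ∀ i, MeasurableSet (A i)) (a : ι → ℝ) :
    ∫ ω, ∑ i ∈ u, (A i).indicator 1 ω * a i ∂μ = ∑ i ∈ u, μ.real (A i) * a i := by
  rw [integral_finsetSum u fun i _ => (integrable_indicator_one (hA i)).mul_const _]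
  simp_rw [integral_mul_const, integral_indicator_one (hA _)]

lemma variance_sum_mul_indicator_one [IsProbabilityMeasure μ] {ι : Type*} [Fintype ι]
    {A : ι → Set Ω} (hA : ∀ i, MeasurableSet (A i)) (c : ι → ℝ) :
    Var[fun ω => ∑ i, c i * (A i).indicator 1 ω; μ]
      = ∑ i, ∑ j, c i * c j * (μ.real (A i ∩ A j) - μ.real (A i) * μ.real (A j)) := by
  rw [variance_fun_sum fun i => (memLp_indicator_one 2 (hA i)).const_mul (c i)]
  simp_rw [covariance_const_mul_left, covariance_const_mul_right,
    covariance_indicator_one (hA _) (hA _)]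
  simp only [mul_assoc]

end Indicators

lemma Finset.sum_eq_add_sum_filter_pos_add_sum_filter_eq_zero {ι M : Type*} [Fintype ι]
    [DecidableEq ι] [AddCommMonoid M] (f : ι → M) (g : ι → ℝ) (i : ι)
    (hg : ∀ j, j ≠ i → 0 ≤ g j) :
    ∑ j, f j = f i + ∑ j ∈ univ.filter (fun j => j ≠ i ∧ 0 < g j), f j
      + ∑ j ∈ univ.filter (fun j => j ≠ i ∧ g j = 0), f j := by
  have hpos : (univ.erase i).filter (fun j => 0 < g j)
      = univ.filter (fun j => j ≠ i ∧ 0 < g j) := by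
    ext j; simp [and_comm]
  have hzero : (univ.erase i).filter (fun j => ¬ 0 < g j)
      = univ.filter (fun j => j ≠ i ∧ g j = 0) := by
    ext j
    simp only [mem_filter, mem_erase, mem_univ, and_true, true_and, not_lt]
    exact and_congr_right fun hj => (hg j hj).ge_iff_eq'
  rw [← add_sum_erase univ f (mem_univ i), add_assoc, ← hpos, ← hzero,
    sum_filter_add_sum_filter_not]

open Finset in
lemma HorvitzThompson.sum_cov_eq_estimator_sub_bias {ι : Type*} [Fintype ι] [DecidableEq ι]
    (i : ι) (y π p q : ι → ℝ) (hπ : ∀ j, π j ≠ 0) (hpi : p i = π i)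
    (hqp : ∀ j, j ≠ i → q j = p j) (hp : ∀ j, 0 ≤ p j) :
    ∑ j, y i / π i * (y j / π j) * (p j - π i * π j)
      = π i * ((1 - π i) * (y i / π i) ^ 2)
        + ∑ j ∈ univ.filter (fun j => j ≠ i ∧ 0 < q j),
            p j * ((q j - π i * π j) / q j * (y i / π i * (y j / π j)))
        - ∑ j ∈ univ.filter (fun j => j ≠ i ∧ q j = 0), y i * y j := by
  have hq : ∀ j, j ≠ i → 0 ≤ q j := fun j hj => hqp j hj ▸ hp j
  have hpos : ∀ j ∈ univ.filter (fun j => j ≠ i ∧ 0 < q j),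
      y i / π i * (y j / π j) * (p j - π i * π j)
        = p j * ((q j - π i * π j) / q j * (y i / π i * (y j / π j))) := by
    intro j hj
    obtain ⟨hji, hqj⟩ := (mem_filter.mp hj).2
    rw [← hqp j hji]
    field_simp
  have hzero : ∀ j ∈ univ.filter (fun j => j ≠ i ∧ q j = 0),
      y i / π i * (y j / π j) * (p j - π i * π j) = - (y i * y j) := by
    intro j hj
    obtain ⟨hji, hqj⟩ := (mem_filter.mp hj).2
    rw [← hqp j hji, hqj]
    field_simp [hπ i, hπ j]
    ring
  rw [sum_eq_add_sum_filter_pos_add_sum_filter_eq_zero _ q i hq, sum_congr rfl hpos,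
    sum_congr rfl hzero, sum_neg_distrib, hpi]
  field_simp [hπ i]
  ring

theorem horvitz_thompson_variance_estimator_bias_general
    {Ω : Type*} [MeasurableSpace Ω] (P : Measure Ω) [IsProbabilityMeasure P]
    (N : ℕ)
    (A : Fin N → Set Ω) (hA : ∀ i, MeasurableSet (A i))
    (y π : Fin N → ℝ) (πij : Fin N → Fin N → ℝ)
    (hπ : ∀ i, π i = (P (A i)).toReal) (hπpos : ∀ i, 0 < π i)
    (hπij : ∀ i j, i ≠ j → πij i j = (P (A i ∩ A j)).toReal)
    (Yhat Vhat : Ω → ℝ)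
    (hY : Yhat = fun ω =>
      (1 / (N : ℝ)) * ∑ i, (A i).indicator (fun _ => (1 : ℝ)) ω * y i / π i)
    (hV : Vhat = fun ω =>
      (1 / (N : ℝ) ^ 2) * ∑ i, (A i).indicator (fun _ => (1 : ℝ)) ω
          * (1 - π i) * (y i / π i) ^ 2
        + (1 / (N : ℝ) ^ 2) * ∑ i,
            ∑ j ∈ Finset.univ.filter (fun j => j ≠ i ∧ 0 < πij i j),
              (A i ∩ A j).indicator (fun _ => (1 : ℝ)) ω
                * ((πij i j - π i * π j) / πij i j) * (y i / π i) * (y j / π j)) :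
    ∫ ω, Vhat ω ∂P
      = (∫ ω, (Yhat ω - ∫ x, Yhat x ∂P) ^ 2 ∂P)
        + (1 / (N : ℝ) ^ 2) * ∑ i,
            ∑ j ∈ Finset.univ.filter (fun j => j ≠ i ∧ πij i j = 0), y i * y j := by
  classical
  simp only [← Pi.one_def] at hY hV
  simp only [← measureReal_def] at hπ hπij
  have hYsum : Yhat = fun ω => 1 / (N : ℝ) * ∑ i, y i / π i * (A i).indicator 1 ω := by
    rw [hY]; ext ω; congr! 2; ring
  have hVmean : ∫ ω, Vhat ω ∂P
      = 1 / (N : ℝ) ^ 2 * ∑ i, π i * ((1 - π i) * (y i / π i) ^ 2)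
        + 1 / (N : ℝ) ^ 2 * ∑ i,
            ∑ j ∈ Finset.univ.filter (fun j => j ≠ i ∧ 0 < πij i j), P.real (A i ∩ A j)
              * ((πij i j - π i * π j) / πij i j * (y i / π i * (y j / π j))) := by
    simp only [mul_assoc] at hV
    rw [hV, integral_add (by fun_prop (disch := measurability))
        (by fun_prop (disch := measurability)),
      integral_const_mul, integral_const_mul, integral_finsetSum_indicator_one_mul _ hA,
      integral_finsetSum _ (by fun_prop (disch := measurability))]
    simp only [integral_finsetSum_indicator_one_mul _ fun j => (hA _).inter (hA j), ← hπ]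
  have hrow := fun i => HorvitzThompson.sum_cov_eq_estimator_sub_bias i y π
    (fun j => P.real (A i ∩ A j)) (πij i) (fun j => (hπpos j).ne') (by simp [hπ])
    (fun j hj => hπij i j hj.symm) (fun _ => measureReal_nonneg)
  rw [hVmean, ← variance_eq_integral (by rw [hYsum]; fun_prop (disch := measurability)),
    hYsum, variance_const_mul, variance_sum_mul_indicator_one hA]
  simp only [← hπ, hrow, Finset.sum_sub_distrib, Finset.sum_add_distrib, one_div_pow]
  ring

/-- **Bias of the Horvitz–Thompson variance estimator.**
With `V̂ = (1/N²) ∑ᵢ 1_{Aᵢ}(1−πᵢ)(yᵢ/πᵢ)²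
      + (1/N²) ∑ᵢ ∑_{j≠i, π_{ij}>0} 1_{Aᵢ∩Aⱼ}((π_{ij} − πᵢπⱼ)/π_{ij})(yᵢ/πᵢ)(yⱼ/πⱼ)`,
one has `E[V̂] = Var(Ŷ) + A` where `A = (1/N²) ∑ᵢ ∑_{j≠i, π_{ij}=0} yᵢ yⱼ`. -/
theorem horvitz_thompson_variance_estimator_bias
    {Ω : Type*} [MeasurableSpace Ω] (P : Measure Ω) [IsProbabilityMeasure P]
    (N : ℕ) (hN : 0 < N)
    (A : Fin N → Set Ω) (hA : ∀ i, MeasurableSet (A i))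
    (y π : Fin N → ℝ) (πij : Fin N → Fin N → ℝ)
    (hπ : ∀ i, π i = (P (A i)).toReal) (hπpos : ∀ i, 0 < π i)
    (hπij : ∀ i j, i ≠ j → πij i j = (P (A i ∩ A j)).toReal)
    (Yhat Vhat : Ω → ℝ)
    (hY : Yhat = fun ω =>
      (1 / (N : ℝ)) * ∑ i, (A i).indicator (fun _ => (1 : ℝ)) ω * y i / π i)
    (hV : Vhat = fun ω =>
      (1 / (N : ℝ) ^ 2) * ∑ i, (A i).indicator (fun _ => (1 : ℝ)) ω
          * (1 - π i) * (y i / π i) ^ 2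
        + (1 / (N : ℝ) ^ 2) * ∑ i,
            ∑ j ∈ Finset.univ.filter (fun j => j ≠ i ∧ 0 < πij i j),
              (A i ∩ A j).indicator (fun _ => (1 : ℝ)) ω
                * ((πij i j - π i * π j) / πij i j) * (y i / π i) * (y j / π j)) :
    ∫ ω, Vhat ω ∂P
      = (∫ ω, (Yhat ω - ∫ x, Yhat x ∂P) ^ 2 ∂P)
        + (1 / (N : ℝ) ^ 2) * ∑ i,
            ∑ j ∈ Finset.univ.filter (fun j => j ≠ i ∧ πij i j = 0), y i * y j :=
  horvitz_thompson_variance_estimator_bias_general P N A hA y π πij hπ hπpos hπij Yhat Vhat hY hV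
end

section
/- (Bias of the Horvitz–Thompson covariance estimator) Define the covariance estimator Ĉ = (1/N²)∑_{i=1}^N ∑_{j : r_{ij}>0} 1_{B_i ∩ C_j} ((r_{ij} − p_i q_j)/r_{ij}) (y_i/p_i)(z_j/q_j), where the inner sum runs over all j ∈ {1,…,N} (including j = i) with r_{ij} > 0. Then E[Ĉ] = Cov(Ŷ, Ẑ) + (1/N²)∑_{i=1}^N ∑_{j : r_{ij}=0} y_i z_j. -/
open MeasureTheory

/-- **Bias of the Horvitz–Thompson covariance estimator.**
With `Ĉ = (1/N²) ∑ᵢ ∑_{j : r_{ij}>0} 1_{Bᵢ∩Cⱼ}((r_{ij} − pᵢqⱼ)/r_{ij})(yᵢ/pᵢ)(zⱼ/qⱼ)`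
(the inner sum over all `j`, including `j = i`, with `r_{ij} > 0`),
`E[Ĉ] = Cov(Ŷ, Ẑ) + (1/N²) ∑ᵢ ∑_{j : r_{ij}=0} yᵢ zⱼ`,
where `Cov(X,Y) = E[XY] − E[X]E[Y]`. -/
theorem horvitz_thompson_covariance_estimator_bias
    {Ω : Type*} [MeasurableSpace Ω] (P : Measure Ω) [IsProbabilityMeasure P]
    (N : ℕ) (hN : 0 < N)
    (B C : Fin N → Set Ω) (hB : ∀ i, MeasurableSet (B i)) (hC : ∀ i, MeasurableSet (C i))
    (hBC : ∀ i, B i ∩ C i = ∅)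
    (y z p q : Fin N → ℝ) (r : Fin N → Fin N → ℝ)
    (hp : ∀ i, p i = (P (B i)).toReal) (hppos : ∀ i, 0 < p i)
    (hq : ∀ i, q i = (P (C i)).toReal) (hqpos : ∀ i, 0 < q i)
    (hr : ∀ i j, r i j = (P (B i ∩ C j)).toReal)
    (Yhat Zhat Chat : Ω → ℝ)
    (hY : Yhat = fun ω =>
      (1 / (N : ℝ)) * ∑ i, (B i).indicator (fun _ => (1 : ℝ)) ω * y i / p i)
    (hZ : Zhat = fun ω =>
      (1 / (N : ℝ)) * ∑ i, (C i).indicator (fun _ => (1 : ℝ)) ω * z i / q i)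
    (hChat : Chat = fun ω =>
      (1 / (N : ℝ) ^ 2) * ∑ i, ∑ j ∈ Finset.univ.filter (fun j => 0 < r i j),
        (B i ∩ C j).indicator (fun _ => (1 : ℝ)) ω
          * ((r i j - p i * q j) / r i j) * (y i / p i) * (z j / q j)) :
    ∫ ω, Chat ω ∂P
      = ((∫ ω, Yhat ω * Zhat ω ∂P) - (∫ ω, Yhat ω ∂P) * (∫ ω, Zhat ω ∂P))
        + (1 / (N : ℝ) ^ 2) * ∑ i,
            ∑ j ∈ Finset.univ.filter (fun j => r i j = 0), y i * z j := by
  have hint : ∀ (s : Set Ω), MeasurableSet s →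
      Integrable (s.indicator (fun _ => (1:ℝ))) P :=
    fun s hs => (integrable_const (1:ℝ)).indicator hs
  have keyBC : ∀ i j, ∫ ω, (B i ∩ C j).indicator (fun _ => (1:ℝ)) ω ∂P = r i j :=
    fun i j => by rw [hr]; exact integral_indicator_one ((hB i).inter (hC j))
  have keyB : ∀ i, ∫ ω, (B i).indicator (fun _ => (1:ℝ)) ω ∂P = p i :=
    fun i => by rw [hp]; exact integral_indicator_one (hB i)
  have keyC : ∀ i, ∫ ω, (C i).indicator (fun _ => (1:ℝ)) ω ∂P = q i :=
    fun i => by rw [hq]; exact integral_indicator_one (hC i)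
  have hrnn : ∀ i j, 0 ≤ r i j := fun i j => by rw [hr]; exact ENNReal.toReal_nonneg
  have hpne : ∀ i, p i ≠ 0 := fun i => (hppos i).ne'
  have hqne : ∀ i, q i ≠ 0 := fun i => (hqpos i).ne'
  -- integral of Chat
  have IC : ∫ ω, Chat ω ∂P
      = (1 / (N : ℝ) ^ 2) * ∑ i, ∑ j ∈ Finset.univ.filter (fun j => 0 < r i j),
          r i j * (((r i j - p i * q j) / r i j) * (y i / p i) * (z j / q j)) := by
    rw [hChat, integral_const_mul]
    congr 1
    rw [integral_finset_sum _ (fun i _ => integrable_finset_sum _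
      (fun j _ => (((hint _ ((hB i).inter (hC j))).mul_const _).mul_const _).mul_const _))]
    refine Finset.sum_congr rfl fun i _ => ?_
    rw [integral_finset_sum _
      (fun j _ => (((hint _ ((hB i).inter (hC j))).mul_const _).mul_const _).mul_const _)]
    refine Finset.sum_congr rfl fun j _ => ?_
    rw [integral_mul_const, integral_mul_const, integral_mul_const, keyBC]
    ring
  -- integral of Yhat
  have IY : ∫ ω, Yhat ω ∂P = (1 / (N : ℝ)) * ∑ i, y i := by
    rw [hY, integral_const_mul]
    congr 1
    rw [integral_finset_sum _ (fun i _ => ((hint _ (hB i)).mul_const _).div_const _)]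
    refine Finset.sum_congr rfl fun i _ => ?_
    rw [integral_div, integral_mul_const, keyB, mul_comm, mul_div_assoc,
      div_self (hpne i), mul_one]
  have IZ : ∫ ω, Zhat ω ∂P = (1 / (N : ℝ)) * ∑ i, z i := by
    rw [hZ, integral_const_mul]
    congr 1
    rw [integral_finset_sum _ (fun i _ => ((hint _ (hC i)).mul_const _).div_const _)]
    refine Finset.sum_congr rfl fun i _ => ?_
    rw [integral_div, integral_mul_const, keyC, mul_comm, mul_div_assoc,
      div_self (hqne i), mul_one]
  -- pointwise product
  have indmul : ∀ (s t : Set Ω) (ω : Ω),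
      s.indicator (fun _ => (1:ℝ)) ω * t.indicator (fun _ => (1:ℝ)) ω
        = (s ∩ t).indicator (fun _ => (1:ℝ)) ω := by
    intro s t ω
    by_cases hs : ω ∈ s <;> by_cases ht : ω ∈ t <;>
      simp [Set.indicator, hs, ht, Set.mem_inter_iff]
  have hprod : ∀ ω, Yhat ω * Zhat ω
      = (1 / (N : ℝ) ^ 2) * ∑ i, ∑ j,
          (B i ∩ C j).indicator (fun _ => (1:ℝ)) ω * ((y i / p i) * (z j / q j)) := by
    intro ω
    rw [hY, hZ]
    rw [mul_mul_mul_comm, Finset.sum_mul_sum]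
    have h1 : (1 / (N:ℝ)) * (1 / (N:ℝ)) = 1 / (N:ℝ)^2 := by ring
    rw [h1]
    congr 1
    refine Finset.sum_congr rfl fun i _ => Finset.sum_congr rfl fun j _ => ?_
    rw [← indmul]
    ring
  have IYZ : ∫ ω, Yhat ω * Zhat ω ∂P
      = (1 / (N : ℝ) ^ 2) * ∑ i, ∑ j, r i j * ((y i / p i) * (z j / q j)) := by
    rw [show (fun ω => Yhat ω * Zhat ω) = fun ω => (1 / (N : ℝ) ^ 2) * ∑ i, ∑ j,
          (B i ∩ C j).indicator (fun _ => (1:ℝ)) ω * ((y i / p i) * (z j / q j))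
        from funext hprod]
    rw [integral_const_mul]
    congr 1
    rw [integral_finset_sum _ (fun i _ => integrable_finset_sum _
      (fun j _ => (hint _ ((hB i).inter (hC j))).mul_const _))]
    refine Finset.sum_congr rfl fun i _ => ?_
    rw [integral_finset_sum _ (fun j _ => (hint _ ((hB i).inter (hC j))).mul_const _)]
    refine Finset.sum_congr rfl fun j _ => ?_
    rw [integral_mul_const, keyBC]
  rw [IC, IY, IZ, IYZ]
  -- algebra
  have hfilter : ∀ i, Finset.univ.filter (fun j => r i j = 0)
      = Finset.univ.filter (fun j => ¬ 0 < r i j) := by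
    intro i
    refine Finset.filter_congr fun j _ => ?_
    constructor
    · intro h; simp [h]
    · intro h; exact le_antisymm (not_lt.mp h) (hrnn i j)
  have key : ∀ i, ∑ j ∈ Finset.univ.filter (fun j => 0 < r i j),
        r i j * (((r i j - p i * q j) / r i j) * (y i / p i) * (z j / q j))
      = (∑ j, r i j * ((y i / p i) * (z j / q j))) - (∑ j, y i * z j)
        + ∑ j ∈ Finset.univ.filter (fun j => r i j = 0), y i * z j := by
    intro i
    rw [hfilter]
    rw [← Finset.sum_filter_add_sum_filter_not Finset.univ (fun j => 0 < r i j)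
      (fun j => r i j * ((y i / p i) * (z j / q j)))]
    rw [← Finset.sum_filter_add_sum_filter_not Finset.univ (fun j => 0 < r i j)
      (fun j => y i * z j)]
    have h0 : ∀ j ∈ Finset.univ.filter (fun j => ¬ 0 < r i j),
        r i j * ((y i / p i) * (z j / q j)) = 0 := by
      intro j hj
      have : r i j = 0 := le_antisymm (not_lt.mp (Finset.mem_filter.mp hj).2) (hrnn i j)
      simp [this]
    rw [Finset.sum_congr rfl h0, Finset.sum_const_zero]
    have hterm : ∀ j ∈ Finset.univ.filter (fun j => 0 < r i j),
        r i j * (((r i j - p i * q j) / r i j) * (y i / p i) * (z j / q j))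
          = r i j * ((y i / p i) * (z j / q j)) - y i * z j := by
      intro j hj
      have hrne : r i j ≠ 0 := (Finset.mem_filter.mp hj).2.ne'
      field_simp [hpne i, hqne j]
    rw [Finset.sum_congr rfl hterm, Finset.sum_sub_distrib]
    ring
  rw [Finset.sum_congr rfl (fun i _ => key i)]
  rw [Finset.sum_add_distrib, Finset.sum_sub_distrib]
  have hyz : ∑ i, ∑ j, y i * z j = (∑ i, y i) * (∑ j, z j) := by
    rw [Finset.sum_mul_sum]
  rw [hyz]
  ring
end

section
/- (Conservative covariance bounds) Define Ĉ = (1/N²)∑_{i=1}^N ∑_{j : r_{ij}>0} 1_{B_i ∩ C_j} ((r_{ij} − p_i q_j)/r_{ij}) (y_i/p_i)(z_j/q_j), where the inner sum runs over all j ∈ {1,…,N} with r_{ij} > 0, and define D̂ = (1/N²)∑_{i=1}^N ∑_{j : r_{ij}=0} [1_{B_i} y_i²/(2p_i) + 1_{C_j} z_j²/(2q_j)]. Then E[Ĉ − D̂] ≤ Cov(Ŷ, Ẑ) ≤ E[Ĉ + D̂]. -/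
/-!
Expanding both estimators, `Cov(Ŷ, Ẑ) = N⁻² ∑ᵢ ∑ⱼ (rᵢⱼ - pᵢqⱼ)(yᵢ/pᵢ)(zⱼ/qⱼ)`. The terms with
`rᵢⱼ > 0` are exactly the expectations of the terms of `Ĉ` (inverse probability weighting by
`rᵢⱼ`), while a term with `rᵢⱼ = 0` equals `-yᵢzⱼ`, which is not identifiable from the data; by
AM-GM its absolute value is at most `yᵢ²/2 + zⱼ²/2`, the expectation of the corresponding term
of `D̂`. Hence `|Cov(Ŷ, Ẑ) - E[Ĉ]| ≤ E[D̂]`.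
-/

open MeasureTheory Finset

theorem sum_indicator_one_mul_mul_sum_indicator_one_mul {Ω ι κ R : Type*} [CommSemiring R]
    (s : Finset ι) (t : Finset κ) (B : ι → Set Ω) (C : κ → Set Ω) (a : ι → R) (b : κ → R)
    (ω : Ω) :
    (∑ i ∈ s, (B i).indicator (fun _ => (1 : R)) ω * a i)
        * ∑ j ∈ t, (C j).indicator (fun _ => (1 : R)) ω * b j
      = ∑ i ∈ s, ∑ j ∈ t, (B i ∩ C j).indicator (fun _ => (1 : R)) ω * (a i * b j) := by
  rw [sum_mul_sum]
  refine sum_congr rfl fun i _ => sum_congr rfl fun j _ => ?_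
  rw [mul_mul_mul_comm, ← Set.inter_indicator_mul, one_mul]

theorem abs_mul_le_sq_div_two_add_sq_div_two (a b : ℝ) : |a * b| ≤ a ^ 2 / 2 + b ^ 2 / 2 := by
  have := two_mul_le_add_sq |a| |b|
  rw [sq_abs, sq_abs] at this
  rw [abs_mul]
  linarith

theorem abs_sum_sum_sub_sum_sum_filter_le {ι κ : Type*} (s : Finset ι) (t : ι → Finset κ)
    {p q : ι → κ → Prop} [∀ i, DecidablePred (p i)] [∀ i, DecidablePred (q i)]
    (hpq : ∀ i j, q i j ↔ ¬ p i j) {f g : ι → κ → ℝ} (hfg : ∀ i j, q i j → |f i j| ≤ g i j) :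
    |∑ i ∈ s, ∑ j ∈ t i, f i j - ∑ i ∈ s, ∑ j ∈ t i with p i j, f i j|
      ≤ ∑ i ∈ s, ∑ j ∈ t i with q i j, g i j := by
  rw [← sum_sub_distrib]
  refine (abs_sum_le_sum_abs _ _).trans (sum_le_sum fun i _ => ?_)
  rw [← sum_filter_add_sum_filter_not (t i) (p i), add_sub_cancel_left,
    filter_congr fun j _ => (hpq i j).symm]
  exact (abs_sum_le_sum_abs _ _).trans
    (sum_le_sum fun j hj => hfg i j (mem_filter.mp hj).2)

theorem abs_sum_sum_sub_sum_sum_filter_pos_le {ι κ : Type*} (s : Finset ι) (t : ι → Finset κ)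
    {r : ι → κ → ℝ} (hr : ∀ i j, 0 ≤ r i j) {p : ι → ℝ} {q : κ → ℝ} (hp0 : ∀ i, p i ≠ 0)
    (hq0 : ∀ j, q j ≠ 0) (y : ι → ℝ) (z : κ → ℝ) :
    |∑ i ∈ s, ∑ j ∈ t i, (r i j - p i * q j) * (y i / p i * (z j / q j))
        - ∑ i ∈ s, ∑ j ∈ t i with 0 < r i j, (r i j - p i * q j) * (y i / p i * (z j / q j))|
      ≤ ∑ i ∈ s, ∑ j ∈ t i with r i j = 0, (y i ^ 2 / 2 + z j ^ 2 / 2) := by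
  refine abs_sum_sum_sub_sum_sum_filter_le s t
    (fun i j => by rw [not_lt, (hr i j).ge_iff_eq, eq_comm]) fun i j hrij => ?_
  rw [hrij, zero_sub, neg_mul, abs_neg, mul_mul_mul_comm, mul_div_cancel₀ _ (hp0 i),
    mul_div_cancel₀ _ (hq0 j)]
  exact abs_mul_le_sq_div_two_add_sq_div_two _ _

section IndicatorIntegrals

variable {Ω ι κ : Type*} [MeasurableSpace Ω] (P : Measure Ω)

theorem integral_indicator_one_mul {S : Set Ω} (hS : MeasurableSet S) (c : ℝ) :
    ∫ ω, S.indicator (fun _ => (1 : ℝ)) ω * c ∂P = P.real S * c := by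
  rw [integral_mul_const, ← Pi.one_def, integral_indicator_one hS]

theorem integral_const_mul_mul_const_mul_sub (X Z : Ω → ℝ) (c d : ℝ) :
    ∫ ω, c * X ω * (d * Z ω) ∂P - (∫ ω, c * X ω ∂P) * ∫ ω, d * Z ω ∂P
      = c * d * (∫ ω, X ω * Z ω ∂P - (∫ ω, X ω ∂P) * ∫ ω, Z ω ∂P) := by
  simp_rw [mul_mul_mul_comm c, integral_const_mul]
  ring

variable [IsFiniteMeasure P]

theorem integral_sum_indicator_one_mul (s : Finset ι) {S : ι → Set Ω}
    (hS : ∀ k, MeasurableSet (S k)) (c : ι → ℝ) :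
    ∫ ω, ∑ k ∈ s, (S k).indicator (fun _ => (1 : ℝ)) ω * c k ∂P
      = ∑ k ∈ s, P.real (S k) * c k := by
  rw [integral_finsetSum s fun k _ => by fun_prop (disch := exact hS k)]
  exact sum_congr rfl fun k _ => integral_indicator_one_mul P (hS k) (c k)

theorem integral_sum_sum_indicator_one_mul (s : Finset ι) (t : ι → Finset κ)
    {S : ι → κ → Set Ω} (hS : ∀ i j, MeasurableSet (S i j)) (c : ι → κ → ℝ) :
    ∫ ω, ∑ i ∈ s, ∑ j ∈ t i, (S i j).indicator (fun _ => (1 : ℝ)) ω * c i j ∂P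
      = ∑ i ∈ s, ∑ j ∈ t i, P.real (S i j) * c i j := by
  simp_rw [sum_sigma']
  exact integral_sum_indicator_one_mul P _ (fun k : (_ : ι) × κ => hS k.1 k.2) _

theorem integral_sum_indicator_one_mul_div (s : Finset ι) {B : ι → Set Ω}
    (hB : ∀ i, MeasurableSet (B i)) {p : ι → ℝ} (hp : ∀ i, P.real (B i) = p i)
    (hp0 : ∀ i, p i ≠ 0) (y : ι → ℝ) :
    ∫ ω, ∑ i ∈ s, (B i).indicator (fun _ => (1 : ℝ)) ω * y i / p i ∂P = ∑ i ∈ s, y i := by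
  simp_rw [mul_div_assoc]
  rw [integral_sum_indicator_one_mul P s hB]
  exact sum_congr rfl fun i _ => by rw [hp, mul_div_cancel₀ _ (hp0 i)]

theorem integral_mul_sub_integral_mul_integral_sum_indicator_one_mul_div
    (s : Finset ι) (t : Finset κ) {B : ι → Set Ω} {C : κ → Set Ω}
    (hB : ∀ i, MeasurableSet (B i)) (hC : ∀ j, MeasurableSet (C j))
    {p : ι → ℝ} (hp : ∀ i, P.real (B i) = p i) (hp0 : ∀ i, p i ≠ 0)
    {q : κ → ℝ} (hq : ∀ j, P.real (C j) = q j) (hq0 : ∀ j, q j ≠ 0) (y : ι → ℝ) (z : κ → ℝ) :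
    ∫ ω, (∑ i ∈ s, (B i).indicator (fun _ => (1 : ℝ)) ω * y i / p i)
          * ∑ j ∈ t, (C j).indicator (fun _ => (1 : ℝ)) ω * z j / q j ∂P
        - (∫ ω, ∑ i ∈ s, (B i).indicator (fun _ => (1 : ℝ)) ω * y i / p i ∂P)
          * ∫ ω, ∑ j ∈ t, (C j).indicator (fun _ => (1 : ℝ)) ω * z j / q j ∂P
      = ∑ i ∈ s, ∑ j ∈ t, (P.real (B i ∩ C j) - p i * q j) * (y i / p i * (z j / q j)) := by
  rw [integral_sum_indicator_one_mul_div P s hB hp hp0,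
    integral_sum_indicator_one_mul_div P t hC hq hq0]
  simp_rw [mul_div_assoc, sum_indicator_one_mul_mul_sum_indicator_one_mul]
  rw [integral_sum_sum_indicator_one_mul P s (fun _ => t) (fun i j => (hB i).inter (hC j)),
    sum_mul_sum, ← sum_sub_distrib]
  refine sum_congr rfl fun i _ => ?_
  rw [← sum_sub_distrib]
  refine sum_congr rfl fun j _ => ?_
  field_simp [hp0 i, hq0 j]

theorem integral_sum_sum_indicator_one_mul_div_mul_mul (s : Finset ι) (t : ι → Finset κ)
    {S : ι → κ → Set Ω} (hS : ∀ i j, MeasurableSet (S i j)) {r : ι → κ → ℝ}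
    (hr : ∀ i j, P.real (S i j) = r i j) (hr0 : ∀ i, ∀ j ∈ t i, r i j ≠ 0)
    (w : ι → κ → ℝ) (a : ι → ℝ) (b : κ → ℝ) :
    ∫ ω, ∑ i ∈ s, ∑ j ∈ t i,
        (S i j).indicator (fun _ => (1 : ℝ)) ω * (w i j / r i j) * a i * b j ∂P
      = ∑ i ∈ s, ∑ j ∈ t i, w i j * (a i * b j) := by
  simp_rw [mul_assoc]
  rw [integral_sum_sum_indicator_one_mul P s t hS]
  refine sum_congr rfl fun i _ => sum_congr rfl fun j hj => ?_
  rw [hr, ← mul_assoc, mul_div_cancel₀ _ (hr0 i j hj)]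

theorem integral_sum_sum_indicator_one_mul_div_add_indicator_one_mul_div
    (s : Finset ι) (t : ι → Finset κ) {B : ι → Set Ω} {C : κ → Set Ω}
    (hB : ∀ i, MeasurableSet (B i)) (hC : ∀ j, MeasurableSet (C j))
    {p : ι → ℝ} (hp : ∀ i, P.real (B i) = p i) (hp0 : ∀ i, p i ≠ 0)
    {q : κ → ℝ} (hq : ∀ j, P.real (C j) = q j) (hq0 : ∀ j, q j ≠ 0) (u : ι → ℝ) (v : κ → ℝ)
    (c : ℝ) :
    ∫ ω, ∑ i ∈ s, ∑ j ∈ t i, ((B i).indicator (fun _ => (1 : ℝ)) ω * u i / (c * p i)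
        + (C j).indicator (fun _ => (1 : ℝ)) ω * v j / (c * q j)) ∂P
      = ∑ i ∈ s, ∑ j ∈ t i, (u i / c + v j / c) := by
  simp_rw [mul_div_assoc, sum_add_distrib]
  rw [integral_add (by fun_prop (disch := exact hB _)) (by fun_prop (disch := exact hC _)),
    integral_sum_sum_indicator_one_mul P s t fun i _ => hB i,
    integral_sum_sum_indicator_one_mul P s t fun _ j => hC j]
  congr 1 <;> refine sum_congr rfl fun i _ => sum_congr rfl fun j _ => ?_
  · rw [hp, ← mul_div_assoc, mul_comm, mul_div_mul_right _ _ (hp0 i)]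
  · rw [hq, ← mul_div_assoc, mul_comm, mul_div_mul_right _ _ (hq0 j)]

end IndicatorIntegrals

theorem conservative_covariance_bounds_general
    {Ω : Type*} [MeasurableSpace Ω] (P : Measure Ω) [IsProbabilityMeasure P]
    (N : ℕ)
    (B C : Fin N → Set Ω) (hB : ∀ i, MeasurableSet (B i)) (hC : ∀ i, MeasurableSet (C i))
    (y z p q : Fin N → ℝ) (r : Fin N → Fin N → ℝ)
    (hp : ∀ i, p i = (P (B i)).toReal) (hppos : ∀ i, 0 < p i)
    (hq : ∀ i, q i = (P (C i)).toReal) (hqpos : ∀ i, 0 < q i)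
    (hr : ∀ i j, r i j = (P (B i ∩ C j)).toReal)
    (Yhat Zhat Chat Dhat : Ω → ℝ)
    (hY : Yhat = fun ω =>
      (1 / (N : ℝ)) * ∑ i, (B i).indicator (fun _ => (1 : ℝ)) ω * y i / p i)
    (hZ : Zhat = fun ω =>
      (1 / (N : ℝ)) * ∑ i, (C i).indicator (fun _ => (1 : ℝ)) ω * z i / q i)
    (hChat : Chat = fun ω =>
      (1 / (N : ℝ) ^ 2) * ∑ i, ∑ j ∈ Finset.univ.filter (fun j => 0 < r i j),
        (B i ∩ C j).indicator (fun _ => (1 : ℝ)) ω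
          * ((r i j - p i * q j) / r i j) * (y i / p i) * (z j / q j))
    (hDhat : Dhat = fun ω =>
      (1 / (N : ℝ) ^ 2) * ∑ i, ∑ j ∈ Finset.univ.filter (fun j => r i j = 0),
        ((B i).indicator (fun _ => (1 : ℝ)) ω * y i ^ 2 / (2 * p i)
          + (C j).indicator (fun _ => (1 : ℝ)) ω * z j ^ 2 / (2 * q j))) :
    (∫ ω, (Chat ω - Dhat ω) ∂P)
        ≤ (∫ ω, Yhat ω * Zhat ω ∂P) - (∫ ω, Yhat ω ∂P) * (∫ ω, Zhat ω ∂P)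
      ∧ (∫ ω, Yhat ω * Zhat ω ∂P) - (∫ ω, Yhat ω ∂P) * (∫ ω, Zhat ω ∂P)
        ≤ ∫ ω, (Chat ω + Dhat ω) ∂P := by
  have hp' : ∀ i, P.real (B i) = p i := fun i => (hp i).symm
  have hq' : ∀ i, P.real (C i) = q i := fun i => (hq i).symm
  have hr' : ∀ i j, P.real (B i ∩ C j) = r i j := fun i j => (hr i j).symm
  have hp0 : ∀ i, p i ≠ 0 := fun i => (hppos i).ne'
  have hq0 : ∀ i, q i ≠ 0 := fun i => (hqpos i).ne'
  have hcov : (∫ ω, Yhat ω * Zhat ω ∂P) - (∫ ω, Yhat ω ∂P) * (∫ ω, Zhat ω ∂P)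
      = 1 / (N : ℝ) ^ 2 * ∑ i, ∑ j, (r i j - p i * q j) * (y i / p i * (z j / q j)) := by
    subst hY hZ
    rw [integral_const_mul_mul_const_mul_sub,
      integral_mul_sub_integral_mul_integral_sum_indicator_one_mul_div P _ _ hB hC hp' hp0 hq' hq0]
    simp only [hr']
    ring
  have hEC : ∫ ω, Chat ω ∂P = 1 / (N : ℝ) ^ 2 * ∑ i, ∑ j ∈ univ.filter (fun j => 0 < r i j),
      (r i j - p i * q j) * (y i / p i * (z j / q j)) := by
    rw [hChat, integral_const_mul, integral_sum_sum_indicator_one_mul_div_mul_mul P _ _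
      (fun i j => (hB i).inter (hC j)) hr' fun i j hj => (mem_filter.mp hj).2.ne']
  have hED : ∫ ω, Dhat ω ∂P = 1 / (N : ℝ) ^ 2 * ∑ i, ∑ j ∈ univ.filter (fun j => r i j = 0),
      (y i ^ 2 / 2 + z j ^ 2 / 2) := by
    rw [hDhat, integral_const_mul,
      integral_sum_sum_indicator_one_mul_div_add_indicator_one_mul_div P _ _ hB hC hp' hp0 hq' hq0]
  have hgap := abs_sum_sum_sub_sum_sum_filter_pos_le univ (fun _ => univ)
    (fun i j => hr' i j ▸ measureReal_nonneg) hp0 hq0 y z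
  have hCint : Integrable Chat P := by
    subst hChat
    fun_prop (disch := exact (hB _).inter (hC _))
  have hDint : Integrable Dhat P := by
    subst hDhat
    fun_prop (disch := first | exact hB _ | exact hC _)
  obtain ⟨hlo, hhi⟩ := abs_sub_le_iff.mp hgap
  have hN : (0 : ℝ) ≤ 1 / (N : ℝ) ^ 2 := by positivity
  rw [integral_sub hCint hDint, integral_add hCint hDint, hcov, hEC, hED, ← mul_sub, ← mul_add]
  exact ⟨mul_le_mul_of_nonneg_left (by linarith) hN, mul_le_mul_of_nonneg_left (by linarith) hN⟩

/-- **Conservative covariance bounds.**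
With `Ĉ` the Horvitz–Thompson covariance estimator (inner sum over all `j` with
`r_{ij} > 0`) and `D̂ = (1/N²) ∑ᵢ ∑_{j : r_{ij}=0} [1_{Bᵢ} yᵢ²/(2pᵢ) + 1_{Cⱼ} zⱼ²/(2qⱼ)]`,
one has `E[Ĉ − D̂] ≤ Cov(Ŷ, Ẑ) ≤ E[Ĉ + D̂]`, where `Cov(X,Y) = E[XY] − E[X]E[Y]`. -/
theorem conservative_covariance_bounds
    {Ω : Type*} [MeasurableSpace Ω] (P : Measure Ω) [IsProbabilityMeasure P]
    (N : ℕ) (hN : 0 < N)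
    (B C : Fin N → Set Ω) (hB : ∀ i, MeasurableSet (B i)) (hC : ∀ i, MeasurableSet (C i))
    (hBC : ∀ i, B i ∩ C i = ∅)
    (y z p q : Fin N → ℝ) (r : Fin N → Fin N → ℝ)
    (hp : ∀ i, p i = (P (B i)).toReal) (hppos : ∀ i, 0 < p i)
    (hq : ∀ i, q i = (P (C i)).toReal) (hqpos : ∀ i, 0 < q i)
    (hr : ∀ i j, r i j = (P (B i ∩ C j)).toReal)
    (Yhat Zhat Chat Dhat : Ω → ℝ)
    (hY : Yhat = fun ω =>
      (1 / (N : ℝ)) * ∑ i, (B i).indicator (fun _ => (1 : ℝ)) ω * y i / p i)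
    (hZ : Zhat = fun ω =>
      (1 / (N : ℝ)) * ∑ i, (C i).indicator (fun _ => (1 : ℝ)) ω * z i / q i)
    (hChat : Chat = fun ω =>
      (1 / (N : ℝ) ^ 2) * ∑ i, ∑ j ∈ Finset.univ.filter (fun j => 0 < r i j),
        (B i ∩ C j).indicator (fun _ => (1 : ℝ)) ω
          * ((r i j - p i * q j) / r i j) * (y i / p i) * (z j / q j))
    (hDhat : Dhat = fun ω =>
      (1 / (N : ℝ) ^ 2) * ∑ i, ∑ j ∈ Finset.univ.filter (fun j => r i j = 0),
        ((B i).indicator (fun _ => (1 : ℝ)) ω * y i ^ 2 / (2 * p i)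
          + (C j).indicator (fun _ => (1 : ℝ)) ω * z j ^ 2 / (2 * q j))) :
    (∫ ω, (Chat ω - Dhat ω) ∂P)
        ≤ (∫ ω, Yhat ω * Zhat ω ∂P) - (∫ ω, Yhat ω ∂P) * (∫ ω, Zhat ω ∂P)
      ∧ (∫ ω, Yhat ω * Zhat ω ∂P) - (∫ ω, Yhat ω ∂P) * (∫ ω, Zhat ω ∂P)
        ≤ ∫ ω, (Chat ω + Dhat ω) ∂P :=
  conservative_covariance_bounds_general P N B C hB hC y z p q r hp hppos hq hqpos hr Yhat Zhat Chat
    Dhat hY hZ hChat hDhat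
end
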